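/- For every real x > −1/2, ln Γ(x + 1/2) − ln Γ(x + 2) = ∫₀^∞ [ ((e^{−t} − e^{t/2})/(e^{−t} − 1)) · e^{−t x} − 3/2 ] · (e^{−t}/t) dt, where Γ is the Gamma function. -/

import Mathlib

open Real MeasureTheory Set Filter Topology

/-! Auxiliary lemmas for a Malmsten-type integral formula for `log Γ(x+1/2) - log Γ(x+2)`. -/

lemma exp_int_aux {s : ℝ} (hs : 0 < s) : ∫ t in Ioi (0:ℝ), exp (-(s*t)) = 1/s := by
  have h := Real.integral_rpow_mul_exp_neg_mul_Ioi (a := 1) (r := s) one_pos hs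
  simp only [sub_self, Real.rpow_zero, one_mul, Real.rpow_one, Real.Gamma_one, mul_one] at h
  exact h

lemma frullani_integrable {p q : ℝ} (hp : 0 < p) (hpq : p ≤ q) :
    IntegrableOn (fun t => (exp (-(p*t)) - exp (-(q*t)))/t) (Ioi (0:ℝ)) := by
  have hmeas : AEStronglyMeasurable (fun t => (exp (-(p*t)) - exp (-(q*t)))/t)
      (volume.restrict (Ioi (0:ℝ))) := by
    apply Measurable.aestronglyMeasurable
    exact (((measurable_const.mul measurable_id).neg.exp.sub
      ((measurable_const.mul measurable_id).neg.exp)).div measurable_id)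
  refine Integrable.mono' ((exp_neg_integrableOn_Ioi 0 hp).const_mul (q - p)) hmeas ?_
  filter_upwards [ae_restrict_mem measurableSet_Ioi] with t ht
  have ht0 : (0:ℝ) < t := ht
  rw [Real.norm_eq_abs, abs_div, abs_of_nonneg ht0.le]
  have h1 : exp (-(q*t)) ≤ exp (-(p*t)) := by
    apply exp_le_exp.2; nlinarith
  have h2 : exp (-(p*t)) - exp (-(q*t)) ≤ (q - p) * t * exp (-(p*t)) := by
    have he : exp (-(q*t)) = exp (-(p*t)) * exp (-((q-p)*t)) := by
      rw [← Real.exp_add]; ring_nf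
    rw [he]
    have h3 : 1 - (q-p)*t ≤ exp (-((q-p)*t)) := by
      have := Real.add_one_le_exp (-((q-p)*t)); linarith
    nlinarith [exp_pos (-(p*t))]
  rw [abs_of_nonneg (by linarith), div_le_iff₀ ht0]
  calc exp (-(p*t)) - exp (-(q*t)) ≤ (q - p) * t * exp (-(p*t)) := h2
    _ = (q - p) * exp (-(p*t)) * t := by ring
    _ = (q - p) * exp (-p*t) * t := by ring_nf

lemma frullani {p q : ℝ} (hp : 0 < p) (hpq : p ≤ q) :
    ∫ t in Ioi (0:ℝ), (exp (-(p*t)) - exp (-(q*t)))/t = log q - log p := by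
  have hq : 0 < q := lt_of_lt_of_le hp hpq
  have inner : ∀ t ∈ Ioi (0:ℝ), (exp (-(p*t)) - exp (-(q*t)))/t
      = ∫ s in Ioc p q, exp (-(s*t)) := by
    intro t ht
    have ht0 : (0:ℝ) < t := ht
    rw [← intervalIntegral.integral_of_le hpq]
    have : ∀ s : ℝ, exp (-(s*t)) = exp ((-t) * s) := by intro s; ring_nf
    simp_rw [this]
    rw [intervalIntegral.integral_comp_mul_left (fun u => exp u) (neg_ne_zero.2 ht0.ne')]
    rw [integral_exp]
    rw [smul_eq_mul]
    field_simp
    ring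
  rw [setIntegral_congr_fun measurableSet_Ioi inner]
  have hInt : Integrable (fun z : ℝ × ℝ => exp (-(z.1 * z.2)))
      ((volume.restrict (Ioc p q)).prod (volume.restrict (Ioi (0:ℝ)))) := by
    have hmeas : AEStronglyMeasurable (fun z : ℝ × ℝ => exp (-(z.1 * z.2)))
        ((volume.restrict (Ioc p q)).prod (volume.restrict (Ioi (0:ℝ)))) :=
      (Continuous.aestronglyMeasurable (by continuity))
    rw [integrable_prod_iff hmeas]
    constructor
    · filter_upwards [ae_restrict_mem measurableSet_Ioc] with s hs
      have : IntegrableOn (fun t => exp (-s * t)) (Ioi (0:ℝ)) :=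
        exp_neg_integrableOn_Ioi 0 (lt_of_lt_of_le hp hs.1.le)
      simp only [neg_mul] at this; exact this
    · refine Integrable.mono' (integrable_const (1/p)) ?_ ?_
      · exact (hmeas.norm.integral_prod_right')
      · filter_upwards [ae_restrict_mem measurableSet_Ioc] with s hs
        have hs0 : 0 < s := lt_of_lt_of_le hp hs.1.le
        have : (fun t => ‖exp (-(s * t))‖) = fun t => exp (-(s*t)) := by
          funext t; rw [Real.norm_eq_abs, abs_of_pos (exp_pos _)]
        rw [Real.norm_eq_abs, this, exp_int_aux hs0, abs_of_pos (by positivity)]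
        apply div_le_div_of_nonneg_left one_pos.le hp hs.1.le
  have swap := MeasureTheory.integral_integral_swap (f := fun s t => exp (-(s * t)))
    (μ := volume.restrict (Ioc p q)) (ν := volume.restrict (Ioi (0:ℝ))) hInt
  rw [← swap]
  rw [setIntegral_congr_fun measurableSet_Ioc
    (fun s hs => exp_int_aux (lt_of_lt_of_le hp hs.1.le))]
  rw [← intervalIntegral.integral_of_le hpq, integral_one_div
    (by intro h; rcases Set.mem_uIcc.1 h with ⟨h1,_⟩|⟨_,h2⟩ <;> linarith)]
  rw [Real.log_div hq.ne' hp.ne']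

noncomputable def gg (x t : ℝ) : ℝ :=
  (exp (-((x+1/2)*t)) - exp (-((x+2)*t))) * exp (-t) / ((1 - exp (-t))*t) - (3/2)/t

noncomputable def sumform (x : ℝ) (n : ℕ) (t : ℝ) : ℝ :=
  (∑ m ∈ Finset.range (n+1), (exp (-((x+1/2+m)*t)) - exp (-((x+2+m)*t)))/t)
    - 3/2 * ((exp (-(1*t)) - exp (-((n:ℝ)*t)))/t)

lemma exp_neg_le_quad {s : ℝ} (hs : 0 ≤ s) : exp (-s) ≤ 1 - s + s^2 := by
  have h1 : s + 1 ≤ exp s := Real.add_one_le_exp s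
  have h2 : exp (-s) * exp s = 1 := by rw [← Real.exp_add]; simp
  nlinarith [exp_pos (-s), exp_pos s]

set_option maxHeartbeats 1600000 in
lemma gg_bound {x t : ℝ} (hx : -(1/2) < x) (ht : 0 < t) :
    |gg x t| ≤ 3/2*(x+1/2) + 15/4 := by
  obtain ⟨a, ha_def⟩ : ∃ a : ℝ, a = x + 1/2 := ⟨_, rfl⟩
  obtain ⟨C, hC_def⟩ : ∃ C : ℝ, C = 3/2*a + 15/4 := ⟨_, rfl⟩
  rw [show 3/2*(x+1/2) + 15/4 = C by rw [hC_def, ha_def]]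
  have ha : 0 < a := by rw [ha_def]; linarith
  have hC : 15/4 ≤ C := by rw [hC_def]; linarith
  have hE1 : exp (-t) < 1 := by rw [Real.exp_lt_one_iff]; linarith
  have hD : 0 < 1 - exp (-t) := by linarith
  obtain ⟨N, hN_def⟩ : ∃ N : ℝ, N = (exp (-((x+1/2)*t)) - exp (-((x+2)*t))) * exp (-t) :=
    ⟨_, rfl⟩
  have e4 : exp (-((x+2)*t)) = exp (-((x+1/2)*t)) * exp (-(3/2*t)) := by
    rw [← Real.exp_add]; ring_nf
  have e6 : exp (-((x+1/2)*t)) ≤ 1 := by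
    rw [Real.exp_le_one_iff]; nlinarith
  have e3 : 1 - 3/2*t ≤ exp (-(3/2*t)) := by
    have := Real.add_one_le_exp (-(3/2*t)); linarith
  have e2 : 1 - t ≤ exp (-t) := by have := Real.add_one_le_exp (-t); linarith
  have hexp_t : t + 1 ≤ exp t := Real.add_one_le_exp t
  have e5 : exp (-t) * exp t = 1 := by rw [← Real.exp_add]; simp
  have hN0 : 0 ≤ N := by
    rw [hN_def]
    have : exp (-((x+2)*t)) ≤ exp (-((x+1/2)*t)) := by
      apply Real.exp_le_exp.2; nlinarith
    have := exp_pos (-t); nlinarith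
  have hN1 : N ≤ 3/2 * (1 - exp (-t)) := by
    rw [hN_def, e4]
    have h32 : exp (-(3/2*t)) ≤ 1 := by rw [Real.exp_le_one_iff]; nlinarith
    have key : t * exp (-t) ≤ 1 - exp (-t) := by nlinarith [exp_pos (-t)]
    have l1 : exp (-((x+1/2)*t)) * (1 - exp (-(3/2*t))) ≤ 3/2*t := by nlinarith
    nlinarith [mul_le_mul_of_nonneg_right l1 (exp_pos (-t)).le, exp_pos (-t)]
  have hgg : gg x t = (N / (1 - exp (-t)) - 3/2) / t := by
    rw [gg, hN_def]; field_simp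
  have hP0 : 0 ≤ N / (1 - exp (-t)) := div_nonneg hN0 hD.le
  have hP1 : N / (1 - exp (-t)) ≤ 3/2 := (div_le_iff₀ hD).2 (by linarith)
  obtain ⟨P, hP_def⟩ : ∃ P : ℝ, P = N / (1 - exp (-t)) := ⟨_, rfl⟩
  rw [← hP_def] at hP0 hP1
  rw [hgg, ← hP_def, abs_div, abs_of_pos ht, abs_of_nonpos (by linarith), neg_sub,
    div_le_iff₀ ht]
  rcases le_or_gt (1/2) t with h | h
  · have : 15/4 * (1/2 : ℝ) ≤ C * t := mul_le_mul hC h (by norm_num) (by linarith)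
    linarith
  · rcases le_or_gt (3/2 - C * t) 0 with hneg | hpos
    · linarith
    · have hCt : (a + 1) * t < 1 := by
        have h0 := mul_nonneg (show (0:ℝ) ≤ C - 3/2*(a+1) by rw [hC_def]; linarith) ht.le
        have h2 : (C - 3/2*(a+1))*t = C*t - 3/2*(a*t) - 3/2*t := by ring
        have h3 : (a+1)*t = a*t + t := by ring
        rw [h3]; linarith
      have hq : 1 - (a+1)*t ≤ exp (-((x+1/2)*t)) * exp (-t) := by
        have heq : exp (-((x+1/2)*t)) * exp (-t) = exp (-((x+1/2)*t) + -t) := by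
          rw [← Real.exp_add]
        rw [heq]
        have h2 := Real.add_one_le_exp (-((x+1/2)*t) + -t)
        have : -((x+1/2)*t) + -t = -((a+1)*t) := by rw [ha_def]; ring
        rw [this] at h2 ⊢
        linarith
      have hr : 3/2*t - 9/4*t^2 ≤ 1 - exp (-(3/2*t)) := by
        have := exp_neg_le_quad (s := 3/2*t) (by linarith); nlinarith
      have hr0 : 0 ≤ 3/2*t - 9/4*t^2 := by nlinarith
      have hq0 : 0 ≤ 1 - (a+1)*t := by linarith
      have hDt : 1 - exp (-t) ≤ t := by linarith
      have hNge : (1 - (a+1)*t) * (3/2*t - 9/4*t^2) ≤ N := by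
        rw [hN_def, e4]
        have h2 : (1 - (a+1)*t) * (3/2*t - 9/4*t^2)
            ≤ (exp (-((x+1/2)*t)) * exp (-t)) * (1 - exp (-(3/2*t))) :=
          mul_le_mul hq hr hr0 (by positivity)
        nlinarith
      have step1 : (3/2 - C*t) * (1 - exp (-t)) ≤ (3/2 - C*t) * t :=
        mul_le_mul_of_nonneg_left hDt hpos.le
      have step2 : (3/2 - C*t) * t ≤ (1 - (a+1)*t) * (3/2*t - 9/4*t^2) := by
        have hexp : (1 - (a+1)*t) * (3/2*t - 9/4*t^2) - (3/2 - C*t) * t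
            = 9/4*(a+1)*t^3 + (C - 9/4 - 3/2*(a+1))*t^2 := by ring
        have hz : C - 9/4 - 3/2*(a+1) = 3/2*a + 15/4 - 9/4 - 3/2*a - 3/2 := by
          rw [hC_def]; ring
        nlinarith [mul_nonneg (by linarith : (0:ℝ) ≤ a+1)
          (mul_nonneg (mul_nonneg ht.le ht.le) ht.le)]
      have final : (3/2 - C*t) * (1 - exp (-t)) ≤ N := by linarith
      have : 3/2 - C*t ≤ P := by
        rw [hP_def, le_div_iff₀ hD]; linarith
      linarith

lemma key_identity {x t : ℝ} (ht : 0 < t) (n : ℕ) :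
    sumform x n t
    = ((exp (-t) - exp (t/2))/(exp (-t) - 1) * exp (-t*x) - 3/2) * (exp (-t)/t)
      - exp (-t)^n * gg x t := by
  have ht0 : t ≠ 0 := ht.ne'
  have hE1 : exp (-t) ≠ 1 := ne_of_lt (by rw [Real.exp_lt_one_iff]; linarith)
  have hsum : ∀ m ∈ Finset.range (n+1),
      (exp (-((x+1/2+m)*t)) - exp (-((x+2+m)*t)))/t
      = ((exp (-((x+1/2)*t)) - exp (-((x+2)*t)))/t) * exp (-t)^m := by
    intro m _
    rw [show -((x+1/2+(m:ℝ))*t) = -((x+1/2)*t) + m*(-t) by ring,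
        show -((x+2+(m:ℝ))*t) = -((x+2)*t) + m*(-t) by ring,
        Real.exp_add, Real.exp_add, Real.exp_nat_mul]
    ring
  rw [sumform, Finset.sum_congr rfl hsum, ← Finset.mul_sum, geom_sum_eq hE1,
    show -((n:ℝ)*t) = n*(-t) by ring, Real.exp_nat_mul, one_mul, pow_succ, gg]
  generalize exp (-t)^n = P
  have hvA : exp (-((x+1/2)*t)) = exp (-t*x) * exp (-(t/2)) := by
    rw [← Real.exp_add]; ring_nf
  have hv4 : exp (-((x+2)*t)) = exp (-t*x) * exp (-(t/2))^4 := by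
    rw [show -((x+2)*t) = -t*x + (4:ℕ)*(-(t/2)) by push_cast; ring,
      Real.exp_add, Real.exp_nat_mul]
  have hE : exp (-t) = exp (-(t/2))^2 := by
    rw [show -t = (2:ℕ)*(-(t/2)) by push_cast; ring, Real.exp_nat_mul]
  have hEi : exp (t/2) = (exp (-(t/2)))⁻¹ := by rw [Real.exp_neg, inv_inv]
  rw [hvA, hv4, hE, hEi]
  have hv0 : exp (-(t/2)) ≠ 0 := (exp_pos _).ne'
  have hv1 : exp (-(t/2))^2 - 1 ≠ 0 := by
    rw [← hE]; intro hcon; apply hE1; linarith [sub_eq_zero.1 hcon]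
  obtain ⟨v, hv⟩ : ∃ v, exp (-(t/2)) = v := ⟨_, rfl⟩
  obtain ⟨w, hw⟩ : ∃ w, exp (-t*x) = w := ⟨_, rfl⟩
  rw [hv] at hv0 hv1
  rw [hv, hw]
  have hv1' : 1 - v^2 ≠ 0 := by
    intro hcon; apply hv1; linarith [sub_eq_zero.1 hcon]
  field_simp
  ring

lemma gg_meas (x : ℝ) : Measurable (gg x) := by
  unfold gg
  exact ((((measurable_const.mul measurable_id).neg.exp.sub
      ((measurable_const.mul measurable_id).neg.exp)).mul measurable_id.neg.exp).div
      (((measurable_const.sub measurable_id.neg.exp)).mul measurable_id)).sub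
      (measurable_const.div measurable_id)

lemma sumform_meas (x : ℝ) (n : ℕ) : Measurable (sumform x n) := by
  unfold sumform
  refine Measurable.sub ?_ ?_
  · exact Finset.measurable_sum _ (fun m _ =>
      ((measurable_const.mul measurable_id).neg.exp.sub
        ((measurable_const.mul measurable_id).neg.exp)).div measurable_id)
  · exact measurable_const.mul (((measurable_const.mul measurable_id).neg.exp.sub
      ((measurable_const.mul measurable_id).neg.exp)).div measurable_id)

lemma term_integrable {x : ℝ} (hx : -(1/2) < x) (m : ℕ) :
    IntegrableOn (fun t => (exp (-((x+1/2+m)*t)) - exp (-((x+2+m)*t)))/t) (Ioi (0:ℝ)) := by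
  have hm : (0:ℝ) ≤ m := Nat.cast_nonneg m
  have hp : (0:ℝ) < x+1/2+m := by linarith
  exact frullani_integrable hp (by linarith)

lemma sumform_integrable {x : ℝ} (hx : -(1/2) < x) (n : ℕ) (hn : 1 ≤ n) :
    IntegrableOn (sumform x n) (Ioi (0:ℝ)) := by
  unfold sumform
  refine Integrable.sub ?_ ?_
  · exact integrable_finset_sum _ (fun m _ => term_integrable hx m)
  · exact (frullani_integrable one_pos (by exact_mod_cast hn)).const_mul _

lemma sumform_integral {x : ℝ} (hx : -(1/2) < x) (n : ℕ) (hn : 1 ≤ n) :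
    ∫ t in Ioi (0:ℝ), sumform x n t
      = (∑ m ∈ Finset.range (n+1), (log (x+2+m) - log (x+1/2+m))) - 3/2 * log n := by
  unfold sumform
  rw [integral_sub (integrable_finset_sum _ (fun m _ => term_integrable hx m))
    ((frullani_integrable one_pos (by exact_mod_cast hn)).const_mul _),
    integral_finset_sum _ (fun m _ => term_integrable hx m), integral_const_mul,
    frullani one_pos (by exact_mod_cast hn : (1:ℝ) ≤ (n:ℝ))]
  have hterm : ∀ m ∈ Finset.range (n+1),
      (∫ t in Ioi (0:ℝ), (exp (-((x+1/2+(m:ℝ))*t)) - exp (-((x+2+(m:ℝ))*t)))/t)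
        = log (x+2+(m:ℝ)) - log (x+1/2+(m:ℝ)) := by
    intro m _
    have hm : (0:ℝ) ≤ (m:ℝ) := Nat.cast_nonneg m
    exact frullani (by linarith) (by linarith)
  rw [Finset.sum_congr rfl hterm]
  simp [Real.log_one]

lemma seq_diff (x : ℝ) (n : ℕ) :
    Real.BohrMollerup.logGammaSeq (x+1/2) n - Real.BohrMollerup.logGammaSeq (x+2) n
      = (∑ m ∈ Finset.range (n+1), (log (x+2+m) - log (x+1/2+m))) - 3/2 * log n := by
  rw [Real.BohrMollerup.logGammaSeq, Real.BohrMollerup.logGammaSeq,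
    Finset.sum_sub_distrib]
  ring

set_option maxHeartbeats 1000000 in
theorem log_gamma_diff_integral (x : ℝ) (hx : -(1 / 2) < x) :
    Real.log (Real.Gamma (x + 1 / 2)) - Real.log (Real.Gamma (x + 2)) =
      ∫ t in Set.Ioi (0 : ℝ),
        ((Real.exp (-t) - Real.exp (t / 2)) / (Real.exp (-t) - 1) * Real.exp (-t * x) - 3 / 2) *
          (Real.exp (-t) / t) := by
  have hx' : -(1/2) < x := hx
  have ha : (0:ℝ) < x + 1/2 := by linarith
  have hb : (0:ℝ) < x + 2 := by linarith
  obtain ⟨F, hF_def⟩ : ∃ F : ℝ → ℝ, F = fun t =>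
      ((exp (-t) - exp (t/2))/(exp (-t) - 1) * exp (-t*x) - 3/2) * (exp (-t)/t) := ⟨_, rfl⟩
  obtain ⟨C, hC_def⟩ : ∃ C : ℝ, C = 3/2*(x+1/2) + 15/4 := ⟨_, rfl⟩
  rw [show (∫ t in Set.Ioi (0:ℝ),
      ((Real.exp (-t) - Real.exp (t / 2)) / (Real.exp (-t) - 1) * Real.exp (-t * x) - 3 / 2) *
        (Real.exp (-t) / t)) = ∫ t in Ioi (0:ℝ), F t by rw [hF_def]]
  have hC0 : 0 ≤ C := by rw [hC_def]; linarith
  have hFmeas : Measurable F := by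
    rw [hF_def]
    exact ((((measurable_id.neg.exp.sub ((measurable_id.div_const 2).exp)).div
      (measurable_id.neg.exp.sub measurable_const)).mul
      ((measurable_id.neg.mul_const x).exp)).sub measurable_const).mul
      (measurable_id.neg.exp.div measurable_id)
  -- F is integrable on Ioi 0
  have hfg_eq1 : ∀ t ∈ Ioi (0:ℝ), F t = sumform x 1 t + exp (-t) * gg x t := by
    intro t ht
    have h := key_identity (x := x) (t := t) ht 1
    rw [pow_one] at h
    rw [hF_def]
    simp only
    linarith
  have hEgg_int : IntegrableOn (fun t => exp (-t) * gg x t) (Ioi (0:ℝ)) := by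
    refine Integrable.mono' (((exp_neg_integrableOn_Ioi 0 one_pos)).const_mul C) ?_ ?_
    · exact (measurable_id.neg.exp.mul (gg_meas x)).aestronglyMeasurable
    · filter_upwards [ae_restrict_mem measurableSet_Ioi] with t ht
      have ht0 : (0:ℝ) < t := ht
      rw [Real.norm_eq_abs, abs_mul, abs_of_pos (exp_pos _)]
      have := gg_bound hx' ht0
      calc exp (-t) * |gg x t| ≤ exp (-t) * C := by
            apply mul_le_mul_of_nonneg_left _ (exp_pos _).le
            rw [← hC_def] at this; exact this
        _ = C * exp (-1*t) := by rw [neg_one_mul]; ring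
  have hF_int : IntegrableOn F (Ioi (0:ℝ)) := by
    refine Integrable.congr ((sumform_integrable hx' 1 le_rfl).add hEgg_int) ?_
    filter_upwards [ae_restrict_mem measurableSet_Ioi] with t ht
    exact (hfg_eq1 t ht).symm
  -- the approximating sequence
  have key : ∀ n : ℕ, ∀ t ∈ Ioi (0:ℝ),
      sumform x (n+1) t = F t - exp (-t)^(n+1) * gg x t := by
    intro n t ht
    rw [key_identity (x := x) (t := t) ht (n+1), hF_def]
  -- limit of logGammaSeq differences
  have h1 : Tendsto (fun n : ℕ =>
      Real.BohrMollerup.logGammaSeq (x+1/2) (n+1) - Real.BohrMollerup.logGammaSeq (x+2) (n+1))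
      atTop (𝓝 (log (Real.Gamma (x+1/2)) - log (Real.Gamma (x+2)))) :=
    ((Real.BohrMollerup.tendsto_log_gamma ha).sub
      (Real.BohrMollerup.tendsto_log_gamma hb)).comp (tendsto_add_atTop_nat 1)
  have h2 : ∀ n : ℕ, Real.BohrMollerup.logGammaSeq (x+1/2) (n+1)
      - Real.BohrMollerup.logGammaSeq (x+2) (n+1) = ∫ t in Ioi (0:ℝ), sumform x (n+1) t := by
    intro n
    rw [seq_diff, sumform_integral hx' (n+1) (Nat.le_add_left 1 n)]
  -- dominated convergence
  have h3 : Tendsto (fun n : ℕ => ∫ t in Ioi (0:ℝ), sumform x (n+1) t) atTop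
      (𝓝 (∫ t in Ioi (0:ℝ), F t)) := by
    have heq : ∀ n : ℕ, (∫ t in Ioi (0:ℝ), sumform x (n+1) t)
        = ∫ t in Ioi (0:ℝ), (F t - exp (-t)^(n+1) * gg x t) :=
      fun n => setIntegral_congr_fun measurableSet_Ioi (fun t ht => key n t ht)
    simp_rw [heq]
    refine MeasureTheory.tendsto_integral_of_dominated_convergence
      (bound := fun t => |F t| + C * exp (-t)) ?_ ?_ ?_ ?_
    · intro n
      exact (hFmeas.sub ((measurable_id.neg.exp.pow_const _).mul
        (gg_meas x))).aestronglyMeasurable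
    · refine Integrable.add hF_int.abs ?_
      have := (exp_neg_integrableOn_Ioi 0 one_pos).const_mul C
      refine this.congr ?_
      filter_upwards with t
      rw [neg_one_mul]
    · intro n
      filter_upwards [ae_restrict_mem measurableSet_Ioi] with t ht
      have ht0 : (0:ℝ) < t := ht
      have hE0 : (0:ℝ) ≤ exp (-t) := (exp_pos _).le
      have hE1 : exp (-t) ≤ 1 := by rw [Real.exp_le_one_iff]; linarith
      have hpow : exp (-t)^(n+1) ≤ exp (-t) := by
        calc exp (-t)^(n+1) ≤ exp (-t)^1 :=
              pow_le_pow_of_le_one hE0 hE1 (Nat.one_le_iff_ne_zero.2 (Nat.succ_ne_zero n))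
          _ = exp (-t) := pow_one _
      have hggb := gg_bound hx' ht0
      rw [← hC_def] at hggb
      rw [Real.norm_eq_abs]
      calc |F t - exp (-t)^(n+1) * gg x t| ≤ |F t| + |exp (-t)^(n+1) * gg x t| :=
            abs_sub _ _
        _ ≤ |F t| + C * exp (-t) := by
            rw [abs_mul, abs_pow, abs_of_nonneg hE0]
            have : exp (-t)^(n+1) * |gg x t| ≤ exp (-t) * C :=
              mul_le_mul hpow hggb (abs_nonneg _) hE0
            linarith
    · filter_upwards [ae_restrict_mem measurableSet_Ioi] with t ht
      have ht0 : (0:ℝ) < t := ht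
      have hE0 : (0:ℝ) ≤ exp (-t) := (exp_pos _).le
      have hE1 : exp (-t) < 1 := by rw [Real.exp_lt_one_iff]; linarith
      have hpow : Tendsto (fun n : ℕ => exp (-t)^(n+1)) atTop (𝓝 0) :=
        (tendsto_pow_atTop_nhds_zero_of_lt_one hE0 hE1).comp (tendsto_add_atTop_nat 1)
      have := tendsto_const_nhds (x := F t) (f := atTop (α := ℕ)) |>.sub
        (hpow.mul (tendsto_const_nhds (x := gg x t)))
      simpa using this
  -- conclude
  have h1' : Tendsto (fun n : ℕ => ∫ t in Ioi (0:ℝ), sumform x (n+1) t) atTop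
      (𝓝 (log (Real.Gamma (x+1/2)) - log (Real.Gamma (x+2)))) := by
    refine h1.congr (fun n => ?_)
    exact h2 n
  exact tendsto_nhds_unique h1' h3
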